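/- Let b > 0 be real and set a = 2b in the standard rectangle setup, so that σ(x,y) = (−x, y), ρ(x,y) = (−b−x, b−y), τ(x,y) = (b−y, b−x). Let K = {(x,y) ∈ [0,b]² : x + y ≤ b} and L = σ(K) = {(x,y) ∈ [−b,0] × [0,b] : y ≤ x + b}. Then K and L are compact and satisfy conditions Rh1–Rh3: K ∪ τ(K) = A with K ∩ τ(K) of Lebesgue measure zero, L ∪ ρ(L) = B with L ∩ ρ(L) of Lebesgue measure zero, and σ(K ∪ L) = K ∪ L. -/
import Mathlib


open MeasureTheory

/-- The square `A = [0,b] × [0,b]` of the standard rectangle setup. -/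
def sqA (b : ℝ) : Set (ℝ × ℝ) := Set.Icc 0 b ×ˢ Set.Icc 0 b

/-- The rectangle `B = [b−a, 0] × [0,b]` of the standard rectangle setup. -/
def recB (a b : ℝ) : Set (ℝ × ℝ) := Set.Icc (b - a) 0 ×ˢ Set.Icc 0 b

/-- `τ(x,y) = (b−y, b−x)`, the reflection in the line `x + y = b`. -/
def tauMap (b : ℝ) : ℝ × ℝ → ℝ × ℝ := fun p => (b - p.2, b - p.1)

/-- `ρ(x,y) = (b−a−x, b−y)`, the half-turn about the center of `B`. -/
def rhoMap (a b : ℝ) : ℝ × ℝ → ℝ × ℝ := fun p => (b - a - p.1, b - p.2)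

/-- `σ(x,y) = (2b−a−x, y)`, the reflection in the vertical bisector of `A ∪ B`. -/
def sigmaMap (a b : ℝ) : ℝ × ℝ → ℝ × ℝ := fun p => (2 * b - a - p.1, p.2)

/-- Compact sets `K ⊆ A` and `L ⊆ B` satisfying conditions Rh1–Rh3 of the standard
rectangle setup: (Rh1) `K ∪ τ(K) = A` with `K ∩ τ(K)` of measure zero;
(Rh2) `L ∪ ρ(L) = B` with `L ∩ ρ(L)` of measure zero; (Rh3) `σ(K ∪ L) = K ∪ L`. -/
def RhKL (a b : ℝ) (K L : Set (ℝ × ℝ)) : Prop :=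
  IsCompact K ∧ IsCompact L ∧ K ⊆ sqA b ∧ L ⊆ recB a b ∧
  K ∪ tauMap b '' K = sqA b ∧ volume (K ∩ tauMap b '' K) = 0 ∧
  L ∪ rhoMap a b '' L = recB a b ∧ volume (L ∩ rhoMap a b '' L) = 0 ∧
  sigmaMap a b '' (K ∪ L) = K ∪ L

lemma image_invol {α : Type*} {f : α → α} (hf : ∀ p, f (f p) = p) (S : Set α) :
    f '' S = f ⁻¹' S := by
  ext p
  constructor
  · rintro ⟨q, hq, rfl⟩; simpa [hf] using hq
  · intro h; exact ⟨f p, h, hf p⟩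

lemma graph_null (f : ℝ → ℝ) (hf : Measurable f) :
    volume {p : ℝ × ℝ | p.2 = f p.1} = 0 := by
  rw [show (volume : Measure (ℝ × ℝ)) = (volume : Measure ℝ).prod volume from rfl]
  refine (Measure.measure_prod_null ?_).mpr ?_
  · exact measurableSet_eq_fun measurable_snd (hf.comp measurable_fst)
  · filter_upwards with x
    have : (Prod.mk x ⁻¹' {p : ℝ × ℝ | p.2 = f p.1}) = {f x} := by
      ext y; simp [Set.preimage]
    simp [this]


/-- For `b > 0` and `a = 2b`, the lower-left triangle
`K = {(x,y) ∈ [0,b]² : x + y ≤ b}` of `A` and its mirror image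
`L = σ(K) = {(x,y) ∈ [−b,0] × [0,b] : y ≤ x + b}` are compact and satisfy
conditions Rh1–Rh3 of the standard rectangle setup. -/
theorem stmt_9 (b : ℝ) (hb : 0 < b)
    (K L : Set (ℝ × ℝ))
    (hK : K = {p ∈ sqA b | p.1 + p.2 ≤ b})
    (hL : L = {p ∈ Set.Icc (-b) 0 ×ˢ Set.Icc 0 b | p.2 ≤ p.1 + b}) :
    sigmaMap (2 * b) b '' K = L ∧ RhKL (2 * b) b K L := by
  have hsinv : ∀ p : ℝ × ℝ, sigmaMap (2 * b) b (sigmaMap (2 * b) b p) = p := by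
    intro p; simp [sigmaMap, Prod.ext_iff]
  have htinv : ∀ p : ℝ × ℝ, tauMap b (tauMap b p) = p := by
    intro p; simp [tauMap, Prod.ext_iff]
  have hrinv : ∀ p : ℝ × ℝ, rhoMap (2 * b) b (rhoMap (2 * b) b p) = p := by
    intro p; simp [rhoMap, Prod.ext_iff]
  -- σ '' K = L
  have hσK : sigmaMap (2 * b) b '' K = L := by
    rw [image_invol hsinv, hK, hL]
    ext ⟨x, y⟩
    simp only [sigmaMap, sqA, Set.mem_preimage, Set.mem_sep_iff, Set.mem_setOf_eq, Set.mem_prod,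
      Set.mem_Icc]
    constructor
    · rintro ⟨⟨⟨h1, h2⟩, h3, h4⟩, h5⟩
      exact ⟨⟨⟨by linarith, by linarith⟩, h3, h4⟩, by linarith⟩
    · rintro ⟨⟨⟨h1, h2⟩, h3, h4⟩, h5⟩
      exact ⟨⟨⟨by linarith, by linarith⟩, h3, h4⟩, by linarith⟩
  refine ⟨hσK, ?_⟩
  -- τ '' K
  have hτK : tauMap b '' K = {p ∈ sqA b | b ≤ p.1 + p.2} := by
    rw [image_invol htinv, hK]
    ext ⟨x, y⟩
    simp only [tauMap, sqA, Set.mem_preimage, Set.mem_sep_iff, Set.mem_setOf_eq, Set.mem_prod, Set.mem_Icc]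
    constructor
    · rintro ⟨⟨⟨h1, h2⟩, h3, h4⟩, h5⟩
      exact ⟨⟨⟨by linarith, by linarith⟩, by linarith, by linarith⟩, by linarith⟩
    · rintro ⟨⟨⟨h1, h2⟩, h3, h4⟩, h5⟩
      exact ⟨⟨⟨by linarith, by linarith⟩, by linarith, by linarith⟩, by linarith⟩
  -- ρ '' L
  have hρL : rhoMap (2 * b) b '' L =
      {p ∈ Set.Icc (-b) 0 ×ˢ Set.Icc 0 b | p.1 + b ≤ p.2} := by
    rw [image_invol hrinv, hL]
    ext ⟨x, y⟩
    simp only [rhoMap, Set.mem_preimage, Set.mem_sep_iff, Set.mem_setOf_eq, Set.mem_prod, Set.mem_Icc]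
    constructor
    · rintro ⟨⟨⟨h1, h2⟩, h3, h4⟩, h5⟩
      exact ⟨⟨⟨by linarith, by linarith⟩, by linarith, by linarith⟩, by linarith⟩
    · rintro ⟨⟨⟨h1, h2⟩, h3, h4⟩, h5⟩
      exact ⟨⟨⟨by linarith, by linarith⟩, by linarith, by linarith⟩, by linarith⟩
  have hKcpt : IsCompact K := by
    rw [hK]
    exact ((isCompact_Icc.prod isCompact_Icc).inter_right
      (isClosed_le (by fun_prop : Continuous fun p : ℝ × ℝ => p.1 + p.2)
        continuous_const))
  have hLcpt : IsCompact L := by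
    rw [hL]
    exact ((isCompact_Icc.prod isCompact_Icc).inter_right
      (isClosed_le continuous_snd
        (by fun_prop : Continuous fun p : ℝ × ℝ => p.1 + b)))
  refine ⟨hKcpt, hLcpt, ?_, ?_, ?_, ?_, ?_, ?_, ?_⟩
  · rw [hK]; exact Set.sep_subset _ _
  · rw [hL]
    have : recB (2 * b) b = Set.Icc (-b) 0 ×ˢ Set.Icc 0 b := by
      rw [recB, show b - 2 * b = -b by ring]
    rw [this]; exact Set.sep_subset _ _
  · rw [hτK, hK]
    ext ⟨x, y⟩
    simp only [Set.mem_union, Set.mem_sep_iff, Set.mem_setOf_eq]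
    constructor
    · rintro (⟨h, _⟩ | ⟨h, _⟩) <;> exact h
    · intro h
      rcases le_total (x + y) b with h' | h'
      · exact Or.inl ⟨h, h'⟩
      · exact Or.inr ⟨h, h'⟩
  · refine measure_mono_null ?_ (graph_null (fun x => b - x) (by fun_prop))
    rw [hτK, hK]
    rintro ⟨x, y⟩ ⟨⟨_, h1⟩, _, h2⟩
    simp only [Set.mem_setOf_eq]
    linarith
  · rw [hρL, hL]
    have : recB (2 * b) b = Set.Icc (-b) 0 ×ˢ Set.Icc 0 b := by
      rw [recB, show b - 2 * b = -b by ring]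
    rw [this]
    ext ⟨x, y⟩
    simp only [Set.mem_union, Set.mem_sep_iff, Set.mem_setOf_eq]
    constructor
    · rintro (⟨h, _⟩ | ⟨h, _⟩) <;> exact h
    · intro h
      rcases le_total y (x + b) with h' | h'
      · exact Or.inl ⟨h, h'⟩
      · exact Or.inr ⟨h, h'⟩
  · refine measure_mono_null ?_ (graph_null (fun x => x + b) (by fun_prop))
    rw [hρL, hL]
    rintro ⟨x, y⟩ ⟨⟨_, h1⟩, _, h2⟩
    simp only [Set.mem_setOf_eq]
    linarith
  · have hσL : sigmaMap (2 * b) b '' L = K := by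
      rw [← hσK, ← Set.image_comp]
      simp only [Function.comp_def, hsinv, Set.image_id']
    rw [Set.image_union, hσK, hσL, Set.union_comm]
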